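/- Fix b_I^E, b_E^I, b_I^I > 0, τ_E, τ_I > 0, a_E, a_I > 0, ν_{E,ext} ≥ 0 and V_R < V_F. Then there exists ε > 0 such that for every b_E^E with 0 < b_E^E < ε, the steady-state system N_E(τ_E + I_1(N_E,N_I)) = 1, N_I(τ_I + I_2(N_E,N_I)) = 1 (with 0 < N_E < 1/τ_E, 0 < N_I < 1/τ_I) has exactly one solution; i.e., if the excitatory-to-excitatory connectivity parameter b_E^E is small enough in comparison with the other parameters, the steady state is unique. -/
import Mathlib

/-- K(w_R, w_F) := ∫_0^∞ (e^{-s²/2}/s)(e^{s·w_F} − e^{s·w_R}) ds (Lebesgue integral on (0,∞)). -/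
noncomputable def K (wR wF : ℝ) : ℝ :=
  ∫ s in Set.Ioi (0 : ℝ), Real.exp (-s ^ 2 / 2) / s * (Real.exp (s * wF) - Real.exp (s * wR))

/-- I₁(N_E,N_I) with V_0^E(N_E,N_I) := b_E^E N_E − b_I^E N_I + (b_E^E − b_E^E) ν_{E,ext}. -/
noncomputable def I1 (VR VF bEE bIE aE ν NE NI : ℝ) : ℝ :=
  K ((VR - (bEE * NE - bIE * NI + (bEE - bEE) * ν)) / Real.sqrt aE)
    ((VF - (bEE * NE - bIE * NI + (bEE - bEE) * ν)) / Real.sqrt aE)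

/-- I₂(N_E,N_I) with V_0^I(N_E,N_I) := b_E^I N_E − b_I^I N_I + (b_E^I − b_E^E) ν_{E,ext}. -/
noncomputable def I2 (VR VF bEE bEI bII aI ν NE NI : ℝ) : ℝ :=
  K ((VR - (bEI * NE - bII * NI + (bEI - bEE) * ν)) / Real.sqrt aI)
    ((VF - (bEI * NE - bII * NI + (bEI - bEE) * ν)) / Real.sqrt aI)

open MeasureTheory Set Real

/-! ### Auxiliary layer 1: the kernel K -/

noncomputable def Kc (M : ℝ) : ℝ := ∫ s in Set.Ioi (0 : ℝ), Real.exp (-s ^ 2 / 2 + s * M)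

lemma gauss_integrableOn (c : ℝ) :
    IntegrableOn (fun s : ℝ => Real.exp (-s ^ 2 / 2 + s * c)) (Set.Ioi 0) := by
  have h : (fun s : ℝ => Real.exp (-s ^ 2 / 2 + s * c))
      = fun s : ℝ => Real.exp (c ^ 2 / 2) * Real.exp (-(1/2) * (s - c) ^ 2) := by
    funext s
    rw [← Real.exp_add]
    ring_nf
  rw [h]
  exact (((integrable_exp_neg_mul_sq (by norm_num : (0:ℝ) < 1/2)).comp_sub_right c).const_mul
    _).integrableOn

lemma Kc_nonneg (M : ℝ) : 0 ≤ Kc M :=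
  setIntegral_nonneg measurableSet_Ioi (fun _ _ => (Real.exp_pos _).le)

lemma exp_sub_exp_le {a b : ℝ} (h : b ≤ a) : Real.exp a - Real.exp b ≤ (a - b) * Real.exp a := by
  have h1 : b - a + 1 ≤ Real.exp (b - a) := Real.add_one_le_exp (b - a)
  have h2 : (b - a + 1) * Real.exp a ≤ Real.exp (b - a) * Real.exp a :=
    mul_le_mul_of_nonneg_right h1 (Real.exp_nonneg a)
  rw [← Real.exp_add] at h2
  have : b - a + a = b := by ring
  rw [this] at h2
  nlinarith [Real.exp_nonneg a]

/-- the integrand of K -/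
noncomputable def Kf (wR wF : ℝ) (s : ℝ) : ℝ :=
  Real.exp (-s ^ 2 / 2) / s * (Real.exp (s * wF) - Real.exp (s * wR))

lemma Kf_meas (wR wF : ℝ) : Measurable (Kf wR wF) := by
  unfold Kf; fun_prop

lemma Kf_nonneg {wR wF : ℝ} (h : wR ≤ wF) {s : ℝ} (hs : 0 < s) : 0 ≤ Kf wR wF s := by
  unfold Kf
  have : Real.exp (s * wR) ≤ Real.exp (s * wF) :=
    Real.exp_le_exp.mpr (by nlinarith)
  exact mul_nonneg (by positivity) (sub_nonneg.mpr this)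

lemma Kf_le {wR wF : ℝ} (h : wR ≤ wF) {s : ℝ} (hs : 0 < s) :
    Kf wR wF s ≤ (wF - wR) * Real.exp (-s ^ 2 / 2 + s * wF) := by
  unfold Kf
  have h1 : Real.exp (s * wF) - Real.exp (s * wR) ≤ (s * wF - s * wR) * Real.exp (s * wF) :=
    exp_sub_exp_le (by nlinarith)
  have h2 : Real.exp (-s ^ 2 / 2) / s * (Real.exp (s * wF) - Real.exp (s * wR))
      ≤ Real.exp (-s ^ 2 / 2) / s * ((s * wF - s * wR) * Real.exp (s * wF)) := by
    apply mul_le_mul_of_nonneg_left h1 (by positivity)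
  refine h2.trans ?_
  rw [Real.exp_add]
  rw [div_mul_eq_mul_div, div_le_iff₀ hs]
  ring_nf
  nlinarith [Real.exp_pos (-s^2/2), Real.exp_pos (s*wF),
    mul_pos (Real.exp_pos (-s^2/2)) (Real.exp_pos (s*wF))]

lemma Kf_integrableOn {wR wF : ℝ} (h : wR ≤ wF) : IntegrableOn (Kf wR wF) (Set.Ioi 0) := by
  apply Integrable.mono' ((gauss_integrableOn wF).const_mul (wF - wR))
  · exact (Kf_meas wR wF).aestronglyMeasurable
  · filter_upwards [ae_restrict_mem measurableSet_Ioi] with s hs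
    rw [Real.norm_eq_abs, abs_of_nonneg (Kf_nonneg h hs)]
    exact Kf_le h hs

lemma K_eq (wR wF : ℝ) : K wR wF = ∫ s in Set.Ioi (0 : ℝ), Kf wR wF s := rfl

lemma Kf_pos {wR wF : ℝ} (h : wR < wF) {s : ℝ} (hs : 0 < s) : 0 < Kf wR wF s := by
  unfold Kf
  have : Real.exp (s * wR) < Real.exp (s * wF) := Real.exp_lt_exp.mpr (by nlinarith)
  have h1 : 0 < Real.exp (-s ^ 2 / 2) / s := by positivity
  nlinarith

lemma Kf_shift (wR wF d s : ℝ) :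
    Kf (wR - d) (wF - d) s = Real.exp (-(s * d)) * Kf wR wF s := by
  unfold Kf
  have h1 : s * (wF - d) = -(s * d) + s * wF := by ring
  have h2 : s * (wR - d) = -(s * d) + s * wR := by ring
  rw [h1, h2, Real.exp_add, Real.exp_add]
  ring

lemma K_pos {wR wF : ℝ} (h : wR < wF) : 0 < K wR wF := by
  rw [K_eq]
  rw [setIntegral_pos_iff_support_of_nonneg_ae ?_ (Kf_integrableOn h.le)]
  · refine lt_of_lt_of_le ?_ (measure_mono (?_ : Set.Ioi (0:ℝ) ⊆ _))
    · simp [Real.volume_Ioi]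
    · intro s hs
      exact ⟨(Kf_pos h hs).ne', hs⟩
  · filter_upwards [ae_restrict_mem measurableSet_Ioi] with s hs
    exact Kf_nonneg h.le hs

lemma K_shift_sub_eq {wR wF d : ℝ} (h : wR ≤ wF) (hd : 0 ≤ d) :
    K wR wF - K (wR - d) (wF - d)
      = ∫ s in Set.Ioi (0:ℝ), (Kf wR wF s - Kf (wR - d) (wF - d) s) := by
  rw [K_eq, K_eq, integral_sub (Kf_integrableOn h) (Kf_integrableOn (by linarith))]

lemma K_shift_lt {wR wF d : ℝ} (h : wR < wF) (hd : 0 < d) :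
    K (wR - d) (wF - d) < K wR wF := by
  have key : 0 < K wR wF - K (wR - d) (wF - d) := by
    rw [K_shift_sub_eq h.le hd.le]
    have heq : (fun s => Kf wR wF s - Kf (wR - d) (wF - d) s)
        = (Kf wR wF - Kf (wR - d) (wF - d)) := rfl
    show 0 < ∫ s in Set.Ioi (0:ℝ), (fun s => Kf wR wF s - Kf (wR - d) (wF - d) s) s
    rw [heq]
    rw [setIntegral_pos_iff_support_of_nonneg_ae ?nn
      ((Kf_integrableOn h.le).sub (Kf_integrableOn (by linarith)))]
    case nn =>
      filter_upwards [ae_restrict_mem measurableSet_Ioi] with s hs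
      rw [Pi.zero_apply, Pi.sub_apply, sub_nonneg, Kf_shift]
      calc Real.exp (-(s * d)) * Kf wR wF s ≤ 1 * Kf wR wF s := by
            apply mul_le_mul_of_nonneg_right _ (Kf_nonneg h.le hs)
            exact Real.exp_le_one_iff.mpr (by nlinarith [Set.mem_Ioi.mp hs])
        _ = Kf wR wF s := one_mul _
    refine lt_of_lt_of_le ?_ (measure_mono (?_ : Set.Ioi (0:ℝ) ⊆ _))
    · simp [Real.volume_Ioi]
    · intro s hs
      refine ⟨?_, hs⟩
      rw [Function.mem_support, Pi.sub_apply, Kf_shift]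
      have h1 : Real.exp (-(s * d)) < 1 :=
        Real.exp_lt_one_iff.mpr (by nlinarith [Set.mem_Ioi.mp hs])
      have h2 := Kf_pos h (Set.mem_Ioi.mp hs)
      nlinarith
  linarith

lemma one_sub_exp_neg_le (x : ℝ) : 1 - Real.exp (-x) ≤ x := by
  nlinarith [Real.add_one_le_exp (-x)]

lemma K_sub_shift_le {wR wF d M : ℝ} (h : wR ≤ wF) (hd : 0 ≤ d) (hM : wF ≤ M) :
    K wR wF - K (wR - d) (wF - d) ≤ d * Kc M := by
  rw [K_shift_sub_eq h hd]
  have hint : ∫ s in Set.Ioi (0:ℝ), d * Real.exp (-s ^ 2 / 2 + s * M) = d * Kc M := by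
    rw [integral_const_mul]; rfl
  rw [← hint]
  apply setIntegral_mono_on
    ((Kf_integrableOn h).sub (Kf_integrableOn (by linarith)))
    ((gauss_integrableOn M).const_mul d) measurableSet_Ioi
  intro s hs
  rw [Set.mem_Ioi] at hs
  rw [Pi.sub_apply, Kf_shift]
  have key : Kf wR wF s - Real.exp (-(s * d)) * Kf wR wF s
      = (1 - Real.exp (-(s * d))) * Kf wR wF s := by ring
  rw [key]
  have h1 : (1 - Real.exp (-(s * d))) ≤ s * d := one_sub_exp_neg_le _
  have h2 : Kf wR wF s ≤ Real.exp (-s ^ 2 / 2) / s * Real.exp (s * wF) := by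
    unfold Kf
    apply mul_le_mul_of_nonneg_left _ (by positivity)
    nlinarith [Real.exp_pos (s * wR)]
  have h3 : (0:ℝ) ≤ 1 - Real.exp (-(s * d)) :=
    sub_nonneg.mpr (Real.exp_le_one_iff.mpr (by nlinarith))
  calc (1 - Real.exp (-(s * d))) * Kf wR wF s
      ≤ (s * d) * (Real.exp (-s ^ 2 / 2) / s * Real.exp (s * wF)) := by
        apply mul_le_mul h1 h2 (Kf_nonneg h hs) (by nlinarith)
    _ = d * (Real.exp (-s ^ 2 / 2) * Real.exp (s * wF)) := by
        field_simp
    _ ≤ d * Real.exp (-s ^ 2 / 2 + s * M) := by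
        rw [Real.exp_add]
        apply mul_le_mul_of_nonneg_left _ hd
        apply mul_le_mul_of_nonneg_left _ (Real.exp_nonneg _)
        exact Real.exp_le_exp.mpr (by nlinarith)

/-! ### Auxiliary layer 2: the function Φ -/

noncomputable def Phi (VR VF a v : ℝ) : ℝ :=
  K ((VR - v) / Real.sqrt a) ((VF - v) / Real.sqrt a)

section PhiLemmas
variable {VR VF a : ℝ}

lemma Phi_shift (v v' : ℝ) :
    Phi VR VF a v' = K ((VR - v) / Real.sqrt a - (v' - v) / Real.sqrt a)
      ((VF - v) / Real.sqrt a - (v' - v) / Real.sqrt a) := by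
  have h1 : (VR - v) / Real.sqrt a - (v' - v) / Real.sqrt a = (VR - v') / Real.sqrt a := by
    ring
  have h2 : (VF - v) / Real.sqrt a - (v' - v) / Real.sqrt a = (VF - v') / Real.sqrt a := by
    ring
  rw [h1, h2]; rfl

lemma w_lt (hV : VR < VF) (ha : 0 < a) (v : ℝ) :
    (VR - v) / Real.sqrt a < (VF - v) / Real.sqrt a := by
  have hs : 0 < Real.sqrt a := Real.sqrt_pos.mpr ha
  gcongr

lemma Phi_pos (hV : VR < VF) (ha : 0 < a) (v : ℝ) : 0 < Phi VR VF a v :=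
  K_pos (w_lt hV ha v)

lemma Phi_strict_anti (hV : VR < VF) (ha : 0 < a) {v v' : ℝ} (h : v < v') :
    Phi VR VF a v' < Phi VR VF a v := by
  have hs : 0 < Real.sqrt a := Real.sqrt_pos.mpr ha
  rw [Phi_shift v v']
  exact K_shift_lt (w_lt hV ha v) (div_pos (by linarith) hs)

lemma Phi_anti (hV : VR < VF) (ha : 0 < a) {v v' : ℝ} (h : v ≤ v') :
    Phi VR VF a v' ≤ Phi VR VF a v := by
  rcases eq_or_lt_of_le h with rfl | h
  · exact le_refl _
  · exact (Phi_strict_anti hV ha h).le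

lemma Phi_lip (hV : VR < VF) (ha : 0 < a) {vlo v v' : ℝ} (hlo : vlo ≤ v) (h : v ≤ v') :
    Phi VR VF a v - Phi VR VF a v'
      ≤ (v' - v) * (Kc ((VF - vlo) / Real.sqrt a) / Real.sqrt a) := by
  have hs : 0 < Real.sqrt a := Real.sqrt_pos.mpr ha
  rw [Phi_shift v v']
  have := K_sub_shift_le (wR := (VR - v) / Real.sqrt a) (wF := (VF - v) / Real.sqrt a)
    (d := (v' - v) / Real.sqrt a) (M := (VF - vlo) / Real.sqrt a)
    (w_lt hV ha v).le (div_nonneg (by linarith) hs.le)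
    (by gcongr)
  calc Phi VR VF a v - _ ≤ (v' - v) / Real.sqrt a * Kc ((VF - vlo) / Real.sqrt a) := this
    _ = (v' - v) * (Kc ((VF - vlo) / Real.sqrt a) / Real.sqrt a) := by ring

lemma Phi_abs_sub_le (hV : VR < VF) (ha : 0 < a) {vlo v v' : ℝ} (hv : vlo ≤ v) (hv' : vlo ≤ v') :
    |Phi VR VF a v - Phi VR VF a v'|
      ≤ (Kc ((VF - vlo) / Real.sqrt a) / Real.sqrt a) * |v - v'| := by
  set L := Kc ((VF - vlo) / Real.sqrt a) / Real.sqrt a with hL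
  rcases le_total v v' with h | h
  · rw [abs_of_nonneg (by linarith [Phi_anti hV ha h]), abs_of_nonpos (by linarith)]
    have := Phi_lip hV ha hv h
    nlinarith
  · rw [abs_of_nonpos (by linarith [Phi_anti hV ha h]), abs_of_nonneg (by linarith)]
    have := Phi_lip hV ha hv' h
    nlinarith

lemma Phi_continuous (hV : VR < VF) (ha : 0 < a) : Continuous (Phi VR VF a) := by
  rw [continuous_iff_continuousAt]
  intro v₀
  have hlip : LipschitzOnWith
      (Real.toNNReal (Kc ((VF - (v₀ - 1)) / Real.sqrt a) / Real.sqrt a))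
      (Phi VR VF a) (Set.Ici (v₀ - 1)) := by
    rw [lipschitzOnWith_iff_dist_le_mul]
    intro x hx y hy
    rw [Real.dist_eq, Real.dist_eq]
    refine (Phi_abs_sub_le hV ha hx hy).trans ?_
    apply mul_le_mul_of_nonneg_right _ (abs_nonneg _)
    exact Real.le_coe_toNNReal _
  exact hlip.continuousOn.continuousAt (Ici_mem_nhds (by linarith))

end PhiLemmas

/-! ### Auxiliary layer 3: solving the inhibitory equation -/

section NI
variable {VR VF a τ γ : ℝ}

lemma Gmono (β c : ℝ) (hV : VR < VF) (ha : 0 < a) (hτ : 0 < τ) (hγ : 0 < γ) (x : ℝ)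
    {n m : ℝ} (hn : 0 ≤ n) (hnm : n < m) :
    n * (τ + Phi VR VF a (β * x - γ * n + c)) < m * (τ + Phi VR VF a (β * x - γ * m + c)) := by
  have harg : β * x - γ * m + c < β * x - γ * n + c := by nlinarith
  have hPhi : Phi VR VF a (β * x - γ * n + c) < Phi VR VF a (β * x - γ * m + c) :=
    Phi_strict_anti hV ha harg
  have h1 := Phi_pos hV ha (β * x - γ * n + c)
  nlinarith

lemma exists_unique_NI (β c : ℝ) (hV : VR < VF) (ha : 0 < a) (hτ : 0 < τ) (hγ : 0 < γ)
    (x : ℝ) :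
    ∃! NI : ℝ, NI ∈ Set.Ioo 0 (1/τ) ∧
      NI * (τ + Phi VR VF a (β * x - γ * NI + c)) = 1 := by
  have hcont : ContinuousOn (fun NI : ℝ => NI * (τ + Phi VR VF a (β * x - γ * NI + c)))
      (Set.Icc 0 (1/τ)) := by
    apply ContinuousOn.mul continuousOn_id
    apply ContinuousOn.add continuousOn_const
    exact ((Phi_continuous hV ha).comp (by continuity)).continuousOn
  have h0 : (0:ℝ) * (τ + Phi VR VF a (β * x - γ * 0 + c)) = 0 := by ring
  have htop : 1 < (1/τ) * (τ + Phi VR VF a (β * x - γ * (1/τ) + c)) := by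
    have hP := Phi_pos hV ha (β * x - γ * (1/τ) + c)
    calc (1:ℝ) = (1/τ) * τ := by field_simp
      _ < (1/τ) * (τ + Phi VR VF a (β * x - γ * (1/τ) + c)) := by
          apply mul_lt_mul_of_pos_left (by linarith) (by positivity)
  have hsub := intermediate_value_Icc (by positivity : (0:ℝ) ≤ 1/τ) hcont
  have h1mem : (1:ℝ) ∈ Set.Icc ((0:ℝ) * (τ + Phi VR VF a (β * x - γ * 0 + c)))
      ((1/τ) * (τ + Phi VR VF a (β * x - γ * (1/τ) + c))) := by
    constructor
    · rw [h0]; norm_num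
    · exact htop.le
  obtain ⟨NI, hNI, hNIeq0⟩ := hsub h1mem
  have hNIeq : NI * (τ + Phi VR VF a (β * x - γ * NI + c)) = 1 := hNIeq0
  have hne0 : NI ≠ 0 := by
    intro h; rw [h] at hNIeq; rw [zero_mul] at hNIeq; norm_num at hNIeq
  have hnetop : NI ≠ 1/τ := by
    intro h; rw [h] at hNIeq; rw [hNIeq] at htop; exact lt_irrefl _ htop
  refine ⟨NI, ⟨⟨lt_of_le_of_ne hNI.1 (Ne.symm hne0), lt_of_le_of_ne hNI.2 hnetop⟩, hNIeq⟩, ?_⟩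
  rintro y ⟨hy, hyeq⟩
  by_contra hne
  rcases lt_or_gt_of_ne hne with hlt | hlt
  · have := Gmono β c hV ha hτ hγ x hy.1.le hlt
    rw [hyeq, hNIeq] at this; exact lt_irrefl _ this
  · have := Gmono β c hV ha hτ hγ x (lt_of_le_of_ne hNI.1 (Ne.symm hne0)).le hlt
    rw [hyeq, hNIeq] at this; exact lt_irrefl _ this

variable {β c : ℝ} {h : ℝ → ℝ}

lemma NIfun_mono (hV : VR < VF) (ha : 0 < a) (hτ : 0 < τ) (hγ : 0 < γ) (hβ : 0 ≤ β)
    (hmem : ∀ x, h x ∈ Set.Ioo 0 (1/τ))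
    (heq : ∀ x, h x * (τ + Phi VR VF a (β * x - γ * h x + c)) = 1)
    {x y : ℝ} (hxy : x ≤ y) : h x ≤ h y := by
  by_contra hcon
  push_neg at hcon
  have harg : β * x - γ * h x + c < β * y - γ * h y + c := by nlinarith
  have hPhi : Phi VR VF a (β * y - γ * h y + c) ≤ Phi VR VF a (β * x - γ * h x + c) :=
    (Phi_strict_anti hV ha harg).le
  have h1 := (hmem x).1
  have h2 := (hmem y).1
  have e1 := heq x
  have e2 := heq y
  have hP := Phi_pos hV ha (β * y - γ * h y + c)
  nlinarith

lemma NIfun_lip (hV : VR < VF) (ha : 0 < a) (hτ : 0 < τ) (hγ : 0 < γ) (hβ : 0 ≤ β)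
    {vlo : ℝ} (hvlo : vlo ≤ c - γ / τ)
    (hmem : ∀ x, h x ∈ Set.Ioo 0 (1/τ))
    (heq : ∀ x, h x * (τ + Phi VR VF a (β * x - γ * h x + c)) = 1)
    {x y : ℝ} (hx : 0 ≤ x) (hxy : x ≤ y) :
    h y - h x ≤ Kc ((VF - vlo) / Real.sqrt a) / Real.sqrt a * β / τ ^ 2 * (y - x) := by
  set L := Kc ((VF - vlo) / Real.sqrt a) / Real.sqrt a with hL
  have hL0 : 0 ≤ L := div_nonneg (Kc_nonneg _) (Real.sqrt_nonneg _)
  have hmono : h x ≤ h y := NIfun_mono hV ha hτ hγ hβ hmem heq hxy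
  have h1 := (hmem x).1; have h1' := (hmem x).2
  have h2 := (hmem y).1; have h2' := (hmem y).2
  set Ax := β * x - γ * h x + c with hAx
  set Ay := β * y - γ * h y + c with hAy
  have e1 := heq x
  have e2 := heq y
  rw [← hAx] at e1
  rw [← hAy] at e2
  rcases le_or_gt Ay Ax with hc2 | hc2
  · have hPhi : Phi VR VF a Ax ≤ Phi VR VF a Ay := Phi_anti hV ha hc2
    have hyx : h y ≤ h x := by nlinarith [Phi_pos hV ha Ax]
    have : 0 ≤ L * β / τ ^ 2 * (y - x) :=
      mul_nonneg (by positivity) (by linarith)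
    linarith
  · have hlo : vlo ≤ Ax := by
      rw [hAx]
      have : γ * h x ≤ γ / τ := by
        rw [div_eq_mul_inv, ← one_div]
        exact mul_le_mul_of_nonneg_left h1'.le hγ.le
      nlinarith
    have hPhi : Phi VR VF a Ax - Phi VR VF a Ay ≤ (Ay - Ax) * L :=
      Phi_lip hV ha hlo hc2.le
    have hAdiff : Ay - Ax ≤ β * (y - x) := by
      rw [hAx, hAy]; nlinarith
    have hPhi2 : Phi VR VF a Ax - Phi VR VF a Ay ≤ β * (y - x) * L := by
      refine hPhi.trans ?_
      exact mul_le_mul_of_nonneg_right hAdiff hL0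
    have key : h y - h x = h x * h y * (Phi VR VF a Ax - Phi VR VF a Ay) := by
      linear_combination h x * e2 - h y * e1
    have hD0 : 0 ≤ Phi VR VF a Ax - Phi VR VF a Ay := by
      have := Phi_anti hV ha hc2.le
      linarith
    have step1 : h x * h y * (Phi VR VF a Ax - Phi VR VF a Ay)
        ≤ h x * h y * (β * (y - x) * L) :=
      mul_le_mul_of_nonneg_left hPhi2 (mul_pos h1 h2).le
    have hxy2 : h x * h y ≤ 1 / τ ^ 2 := by
      have e : (1:ℝ) / τ ^ 2 = (1/τ) * (1/τ) := by ring
      rw [e]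
      exact mul_le_mul h1'.le h2'.le h2.le (by positivity)
    have hR0 : 0 ≤ β * (y - x) * L := mul_nonneg (mul_nonneg hβ (by linarith)) hL0
    have step2 : h x * h y * (β * (y - x) * L) ≤ 1 / τ ^ 2 * (β * (y - x) * L) :=
      mul_le_mul_of_nonneg_right hxy2 hR0
    have efin : 1 / τ ^ 2 * (β * (y - x) * L) = L * β / τ ^ 2 * (y - x) := by ring
    rw [key]
    linarith

end NI

/- STATEMENT 7 -/
theorem unique_steady_state_small_bEE (VR VF bIE bEI bII τE τI aE aI ν : ℝ)
    (hV : VR < VF) (hbIE : 0 < bIE) (hbEI : 0 < bEI) (hbII : 0 < bII)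
    (hτE : 0 < τE) (hτI : 0 < τI) (haE : 0 < aE) (haI : 0 < aI) (hν : 0 ≤ ν) :
    ∃ ε > 0, ∀ bEE : ℝ, 0 < bEE → bEE < ε →
      ∃! p : ℝ × ℝ, p.1 ∈ Set.Ioo 0 (1 / τE) ∧ p.2 ∈ Set.Ioo 0 (1 / τI) ∧
        p.1 * (τE + I1 VR VF bEE bIE aE ν p.1 p.2) = 1 ∧
        p.2 * (τI + I2 VR VF bEE bEI bII aI ν p.1 p.2) = 1 := by
  classical
  obtain ⟨LE, hLEdef⟩ : ∃ LE : ℝ, LE = Kc ((VF - -(bIE / τI)) / Real.sqrt aE) / Real.sqrt aE :=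
    ⟨_, rfl⟩
  have hLE0 : 0 ≤ LE := hLEdef ▸ div_nonneg (Kc_nonneg _) (Real.sqrt_nonneg _)
  have hmax : (0:ℝ) < max LE 1 := lt_of_lt_of_le one_pos (le_max_right _ _)
  have hεpos : 0 < min 1 (τE ^ 2 / (2 * max LE 1)) :=
    lt_min one_pos (div_pos (pow_pos hτE 2) (by linarith))
  refine ⟨min 1 (τE ^ 2 / (2 * max LE 1)), hεpos, ?_⟩
  intro bEE hb0 hb1
  have hb1' : bEE ≤ 1 := le_of_lt (lt_of_lt_of_le hb1 (min_le_left _ _))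
  have hbLE : bEE * LE < τE ^ 2 / 2 := by
    have h2 : bEE < τE ^ 2 / (2 * max LE 1) := lt_of_lt_of_le hb1 (min_le_right _ _)
    have e : τE ^ 2 / (2 * max LE 1) = (τE ^ 2 / 2) / max LE 1 := by
      field_simp
    rw [e, lt_div_iff₀ hmax] at h2
    have h3 : bEE * LE ≤ bEE * max LE 1 := mul_le_mul_of_nonneg_left (le_max_left _ _) hb0.le
    linarith
  -- the inhibitory solver h
  have hI : ∀ x : ℝ, ∃ NI : ℝ, (NI ∈ Set.Ioo 0 (1/τI) ∧
        NI * (τI + Phi VR VF aI (bEI * x - bII * NI + (bEI - bEE) * ν)) = 1) ∧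
      ∀ y : ℝ, (y ∈ Set.Ioo 0 (1/τI) ∧
        y * (τI + Phi VR VF aI (bEI * x - bII * y + (bEI - bEE) * ν)) = 1) → y = NI :=
    fun x => exists_unique_NI bEI ((bEI - bEE) * ν) hV haI hτI hbII x
  choose h hP using hI
  have hmem : ∀ x, h x ∈ Set.Ioo 0 (1/τI) := fun x => (hP x).1.1
  have heq : ∀ x, h x * (τI + Phi VR VF aI (bEI * x - bII * h x + (bEI - bEE) * ν)) = 1 :=
    fun x => (hP x).1.2
  have huni : ∀ x y, (y ∈ Set.Ioo 0 (1/τI) ∧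
      y * (τI + Phi VR VF aI (bEI * x - bII * y + (bEI - bEE) * ν)) = 1) → y = h x :=
    fun x => (hP x).2
  clear hP
  have hmono : ∀ {x y : ℝ}, x ≤ y → h x ≤ h y :=
    fun {x y} hxy => NIfun_mono hV haI hτI hbII hbEI.le hmem heq hxy
  obtain ⟨CI, hCIdef⟩ : ∃ CI : ℝ, CI = Kc ((VF - ((bEI - bEE) * ν - bII / τI)) / Real.sqrt aI)
      / Real.sqrt aI * bEI / τI ^ 2 := ⟨_, rfl⟩
  have hCI0 : 0 ≤ CI := by
    rw [hCIdef]
    have := Kc_nonneg ((VF - ((bEI - bEE) * ν - bII / τI)) / Real.sqrt aI)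
    positivity
  have hlip : ∀ {x y : ℝ}, 0 ≤ x → x ≤ y → h y - h x ≤ CI * (y - x) := by
    intro x y hx hxy
    rw [hCIdef]
    exact NIfun_lip hV haI hτI hbII hbEI.le (le_refl _) hmem heq hx hxy
  -- h is continuous on Ici 0
  have hcont : ContinuousOn h (Set.Ici 0) := by
    have : LipschitzOnWith (Real.toNNReal CI) h (Set.Ici 0) := by
      rw [lipschitzOnWith_iff_dist_le_mul]
      intro x hx y hy
      rw [Real.dist_eq, Real.dist_eq]
      have hb : (Real.toNNReal CI : ℝ) * |x - y| = CI * |x - y| := by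
        rw [Real.coe_toNNReal _ hCI0]
      rw [hb]
      rcases le_total x y with hxy | hxy
      · rw [abs_of_nonpos (by linarith [hmono hxy]), abs_of_nonpos (by linarith)]
        have := hlip hx hxy
        nlinarith [abs_nonneg (x - y), hCI0]
      · rw [abs_of_nonneg (by linarith [hmono hxy]), abs_of_nonneg (by linarith)]
        have := hlip hy hxy
        nlinarith
    exact this.continuousOn
  -- the excitatory one-variable function F
  obtain ⟨B, hB⟩ : ∃ B : ℝ → ℝ, ∀ x,
      B x = bEE * x - bIE * h x + (bEE - bEE) * ν := ⟨_, fun _ => rfl⟩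
  obtain ⟨F, hF⟩ : ∃ F : ℝ → ℝ, ∀ x,
      F x = x * (τE + Phi VR VF aE (B x)) := ⟨_, fun _ => rfl⟩
  have hBlo : ∀ x, 0 ≤ x → -(bIE / τI) ≤ B x := by
    intro x hx
    have h1' := (hmem x).2
    have h1 := (hmem x).1
    have hbb : bIE * h x ≤ bIE / τI := by
      rw [div_eq_mul_inv, ← one_div]
      exact mul_le_mul_of_nonneg_left h1'.le hbIE.le
    rw [hB]
    nlinarith
  -- F is strictly monotone on [0, 1/τE]
  have hFmono : ∀ x y : ℝ, 0 ≤ x → x < y → y ≤ 1/τE → F x < F y := by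
    intro x y hx hxy hy
    have hPx := Phi_pos hV haE (B x)
    have hPy := Phi_pos hV haE (B y)
    rw [hF, hF]
    rcases le_or_gt (B y) (B x) with hc | hc
    · have hPhi : Phi VR VF aE (B x) ≤ Phi VR VF aE (B y) := Phi_anti hV haE hc
      nlinarith
    · have hPhiL := Phi_lip (vlo := -(bIE / τI)) hV haE (hBlo x hx) hc.le
      rw [← hLEdef] at hPhiL
      have hBd : B y - B x ≤ bEE * (y - x) := by
        rw [hB, hB]
        nlinarith [hmono hxy.le]
      have hPhi2 : Phi VR VF aE (B x) - Phi VR VF aE (B y) ≤ bEE * (y - x) * LE :=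
        hPhiL.trans (mul_le_mul_of_nonneg_right hBd hLE0)
      have hxE : x * τE ≤ 1 := by
        have hle : x ≤ 1/τE := by linarith
        calc x * τE ≤ (1/τE) * τE := mul_le_mul_of_nonneg_right hle hτE.le
          _ = 1 := by field_simp
      have s1 : x * (Phi VR VF aE (B x) - Phi VR VF aE (B y)) ≤ x * (bEE * (y - x) * LE) :=
        mul_le_mul_of_nonneg_left hPhi2 hx
      have s2 : x * (bEE * (y - x) * LE) ≤ (1/τE) * (bEE * (y - x) * LE) :=
        mul_le_mul_of_nonneg_right (by linarith)
          (mul_nonneg (mul_nonneg hb0.le (by linarith)) hLE0)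
      have s3 : (1/τE) * (bEE * (y - x) * LE) = (bEE * LE / τE) * (y - x) := by ring
      have s4 : bEE * LE / τE ≤ τE / 2 := by
        rw [div_le_div_iff₀ hτE (by norm_num : (0:ℝ) < 2)]
        linarith only [hbLE]
      have s5 : x * (Phi VR VF aE (B x) - Phi VR VF aE (B y)) ≤ (τE / 2) * (y - x) := by
        have s6 : (bEE * LE / τE) * (y - x) ≤ (τE / 2) * (y - x) :=
          mul_le_mul_of_nonneg_right s4 (by linarith only [hxy])
        linarith only [s1, s2, s3, s6]
      have hd1 : (0:ℝ) < (y - x) * (τE / 2) :=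
        mul_pos (by linarith only [hxy]) (by linarith only [hτE])
      have hd2 : (0:ℝ) ≤ (y - x) * Phi VR VF aE (B y) :=
        mul_nonneg (by linarith only [hxy]) hPy.le
      linarith only [s5, hd1, hd2]
  -- continuity of F on [0, 1/τE]
  have hFc : ContinuousOn F (Set.Icc 0 (1/τE)) := by
    have hFfun : F = fun x => x * (τE + Phi VR VF aE (B x)) := funext hF
    have hBfun : B = fun x => bEE * x - bIE * h x + (bEE - bEE) * ν := funext hB
    rw [hFfun]
    apply ContinuousOn.mul continuousOn_id
    apply ContinuousOn.add continuousOn_const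
    apply (Phi_continuous hV haE).comp_continuousOn
    rw [hBfun]
    apply ContinuousOn.add
    · apply ContinuousOn.sub
      · exact (continuous_const.mul continuous_id).continuousOn
      · exact continuousOn_const.mul (hcont.mono (fun z hz => hz.1))
    · exact continuousOn_const
  -- values at endpoints
  have hF0 : F 0 = 0 := by rw [hF]; ring
  have hFtop : 1 < F (1/τE) := by
    rw [hF]
    have hP := Phi_pos hV haE (B (1/τE))
    calc (1:ℝ) = (1/τE) * τE := by field_simp
      _ < (1/τE) * (τE + Phi VR VF aE (B (1/τE))) := by
          apply mul_lt_mul_of_pos_left (by linarith) (by positivity)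
  -- IVT
  have hsub := intermediate_value_Icc (by positivity : (0:ℝ) ≤ 1/τE) hFc
  have h1mem : (1:ℝ) ∈ Set.Icc (F 0) (F (1/τE)) := by
    constructor
    · rw [hF0]; norm_num
    · exact hFtop.le
  obtain ⟨NE₀, hNE₀, hNE₀eq'⟩ := hsub h1mem
  have hne0 : NE₀ ≠ 0 := by
    intro hcon; rw [hcon, hF0] at hNE₀eq'; norm_num at hNE₀eq'
  have hnetop : NE₀ ≠ 1/τE := by
    intro hcon; rw [hcon] at hNE₀eq'; rw [hNE₀eq'] at hFtop; exact lt_irrefl _ hFtop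
  have hNE₀mem : NE₀ ∈ Set.Ioo 0 (1/τE) :=
    ⟨lt_of_le_of_ne hNE₀.1 (Ne.symm hne0), lt_of_le_of_ne hNE₀.2 hnetop⟩
  -- translations between I1/I2 and Phi
  have e1 : ∀ x, x * (τE + I1 VR VF bEE bIE aE ν x (h x)) = F x := by
    intro x
    rw [hF, hB]
    rfl
  have e2 : ∀ x y, y * (τI + I2 VR VF bEE bEI bII aI ν x y)
      = y * (τI + Phi VR VF aI (bEI * x - bII * y + (bEI - bEE) * ν)) := fun x y => rfl
  -- assemble
  refine ⟨(NE₀, h NE₀), ⟨hNE₀mem, hmem NE₀, ?_, ?_⟩, ?_⟩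
  · exact (e1 NE₀).trans hNE₀eq'
  · exact (e2 NE₀ (h NE₀)).trans (heq NE₀)
  · rintro ⟨q1, q2⟩ ⟨hq1, hq2, hqe1, hqe2⟩
    rw [e2 q1 q2] at hqe2
    have hq2h : q2 = h q1 := huni q1 q2 ⟨hq2, hqe2⟩
    have hFq1 : F q1 = 1 := by
      rw [hq2h] at hqe1
      exact (e1 q1).symm.trans hqe1
    have hq1eq : q1 = NE₀ := by
      by_contra hne
      rcases lt_or_gt_of_ne hne with hlt | hlt
      · have := hFmono q1 NE₀ hq1.1.le hlt hNE₀mem.2.le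
        rw [hFq1, hNE₀eq'] at this; exact lt_irrefl _ this
      · have := hFmono NE₀ q1 hNE₀mem.1.le hlt hq1.2.le
        rw [hFq1, hNE₀eq'] at this; exact lt_irrefl _ this
    rw [Prod.mk.injEq]
    exact ⟨hq1eq, by rw [hq2h, hq1eq]⟩
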